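/- Let u be a continuous fuzzy number (a continuous function u : ℝ → [0,1] that is quasi-concave, attains value 1, and vanishes outside a compact interval) with supp(u) = [a,b] and core(u) = [c,d], a ≤ c < d ≤ b. Define Ũ_n^{(M)}(u) to be 0 outside [a,b] and U_n^{(M)}(u;[a,b]) on [a,b]. Then for n with (b−a)/n < d−c, Ũ_n^{(M)}(u) attains the value 1, i.e., there exists α ∈ [a,b] with Ũ_n^{(M)}(u)(α) = 1. -/

import Mathlib

open Finset Set

/-- Basis functions of the truncated Baskakov operator on `[0,1]`:
`b_{n,k}(x) = C(n+k-1,k) x^k (1+x)^{-(n+k)}`. -/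
noncomputable def bk (n k : ℕ) (x : ℝ) : ℝ :=
  (Nat.choose (n + k - 1) k : ℝ) * x ^ k / (1 + x) ^ (n + k)

/-- Max-product truncated Baskakov operator on `[0,1]`. -/
noncomputable def UM (n : ℕ) (f : ℝ → ℝ) (x : ℝ) : ℝ :=
  ((range (n + 1)).sup' nonempty_range_add_one fun k => bk n k x * f ((k : ℝ) / n)) /
  ((range (n + 1)).sup' nonempty_range_add_one fun k => bk n k x)

/-- Basis functions on a general compact interval `[a,b]`. -/
noncomputable def bkab (a b : ℝ) (n k : ℕ) (x : ℝ) : ℝ :=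
  (Nat.choose (n + k - 1) k : ℝ) * ((x - a) / (b - a)) ^ k /
    ((b - 2 * a + x) / (b - a)) ^ (n + k)

/-- Max-product truncated Baskakov operator on `[a,b]`. -/
noncomputable def UMab (a b : ℝ) (n : ℕ) (f : ℝ → ℝ) (x : ℝ) : ℝ :=
  ((range (n + 1)).sup' nonempty_range_add_one fun k =>
      bkab a b n k x * f (a + (b - a) * k / n)) /
  ((range (n + 1)).sup' nonempty_range_add_one fun k => bkab a b n k x)

/-- Modulus of continuity `ω₁(f;δ)` of `f` on a set `s`. -/
noncomputable def omega1 (f : ℝ → ℝ) (s : Set ℝ) (δ : ℝ) : ℝ :=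
  sSup {d | ∃ x ∈ s, ∃ y ∈ s, |x - y| ≤ δ ∧ d = |f x - f y|}

/-! At `t = j/(n-1)` the Baskakov basis value `bk n k t` is largest for `k = j`, as the ratio
`bk n (k+1) t / bk n k t = (n+k) t / ((k+1)(1+t))` crosses `1` between `k = j - 1` and `k = j`.
Choosing `j` so that the node `a + (b-a) j/n` lies in the core of `u`, the max-product operator at
`a + (b-a) t` is then the quotient of two maxima that are both attained by `bk n j t`. -/

theorem apply_le_apply_of_unimodal {α : Type*} [Preorder α] {f : ℕ → α} {j : ℕ}
    (hup : ∀ n < j, f n ≤ f (n + 1)) (hdown : ∀ n ≥ j, f (n + 1) ≤ f n) (k : ℕ) : f k ≤ f j := by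
  rcases le_total k j with hkj | hjk
  · clear hdown
    induction j, hkj using Nat.le_induction with
    | base => exact le_rfl
    | succ m _ ih => exact (ih fun n hn => hup n (by omega)).trans (hup m (by omega))
  · exact antitoneOn_nat_Ici_of_succ_le hdown (le_refl j) hjk hjk

theorem add_mul_choose_eq_choose_mul_add_one (n k : ℕ) :
    ((n + k : ℕ) : ℝ) * (n + k - 1).choose k = (n + k).choose (k + 1) * ((k : ℝ) + 1) := by
  rcases Nat.eq_zero_or_pos (n + k) with h | h
  · simp [h]
  · obtain ⟨m, hm⟩ : ∃ m, n + k = m + 1 := ⟨n + k - 1, by omega⟩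
    rw [hm, Nat.add_sub_cancel]
    exact_mod_cast Nat.add_one_mul_choose_eq m k

theorem bk_nonneg (n k : ℕ) {t : ℝ} (ht : 0 ≤ t) : 0 ≤ bk n k t := by
  unfold bk; positivity

theorem bk_pos {n : ℕ} (hn : n ≠ 0) (k : ℕ) {t : ℝ} (ht : 0 < t) : 0 < bk n k t := by
  have : 0 < ((n + k - 1).choose k : ℝ) := by exact_mod_cast Nat.choose_pos (by omega)
  unfold bk; positivity

theorem add_one_mul_one_add_mul_bk_succ (n k : ℕ) (t : ℝ) :
    ((k : ℝ) + 1) * (1 + t) * bk n (k + 1) t = (n + k) * t * bk n k t := by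
  have hchoose := add_mul_choose_eq_choose_mul_add_one n k
  push_cast at hchoose
  unfold bk
  rw [show n + (k + 1) - 1 = n + k by omega, ← add_assoc, pow_succ (1 + t)]
  rcases eq_or_ne (1 + t) 0 with h | h
  · rcases Nat.eq_zero_or_pos (n + k) with hnk | hnk
    · obtain ⟨rfl, rfl⟩ : n = 0 ∧ k = 0 := by omega
      simp
    · simp [h, zero_pow hnk.ne']
  · field_simp
    linear_combination (-t ^ (k + 1)) * hchoose

theorem bk_le_bk_succ {n k : ℕ} {t : ℝ} (ht : 0 ≤ t) (h : (k : ℝ) + 1 ≤ (n - 1) * t) :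
    bk n k t ≤ bk n (k + 1) t := by
  have hrec := add_one_mul_one_add_mul_bk_succ n k t
  have hb := bk_nonneg n k ht
  have hcoef : ((k : ℝ) + 1) * (1 + t) ≤ (n + k) * t := by linarith
  refine le_of_mul_le_mul_left ?_ (by positivity : (0 : ℝ) < ((k : ℝ) + 1) * (1 + t))
  rw [hrec]
  exact mul_le_mul_of_nonneg_right hcoef hb

theorem bk_succ_le_bk {n k : ℕ} {t : ℝ} (ht : 0 ≤ t) (h : (n - 1) * t ≤ (k : ℝ) + 1) :
    bk n (k + 1) t ≤ bk n k t := by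
  have hrec := add_one_mul_one_add_mul_bk_succ n k t
  have hb := bk_nonneg n k ht
  have hcoef : (n + k) * t ≤ ((k : ℝ) + 1) * (1 + t) := by linarith
  refine le_of_mul_le_mul_left ?_ (by positivity : (0 : ℝ) < ((k : ℝ) + 1) * (1 + t))
  rw [hrec]
  exact mul_le_mul_of_nonneg_right hcoef hb

theorem bk_le_bk_of_sub_one_mul_eq {n j : ℕ} {t : ℝ} (ht : 0 ≤ t) (hj : ((n : ℝ) - 1) * t = j)
    (k : ℕ) : bk n k t ≤ bk n j t :=
  apply_le_apply_of_unimodal (f := fun k => bk n k t)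
    (fun k hk => bk_le_bk_succ ht (by rw [hj]; exact_mod_cast hk))
    (fun k hk => bk_succ_le_bk ht (by rw [hj]; exact_mod_cast Nat.le_succ_of_le hk)) k

theorem bkab_affine {a b : ℝ} (hab : a ≠ b) (n k : ℕ) (t : ℝ) :
    bkab a b n k (a + (b - a) * t) = bk n k t := by
  have hba : b - a ≠ 0 := sub_ne_zero.mpr hab.symm
  have h1 : (a + (b - a) * t - a) / (b - a) = t := by field_simp; ring
  have h2 : (b - 2 * a + (a + (b - a) * t)) / (b - a) = 1 + t := by field_simp; ring
  rw [bkab, bk, h1, h2]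

theorem Finset.sup'_mul_div_sup'_eq_one {ι : Type*} {s : Finset ι} (hs : s.Nonempty)
    {w g : ι → ℝ} (hw : ∀ k ∈ s, 0 ≤ w k) (hg : ∀ k ∈ s, g k ≤ 1) {i : ι} (hi : i ∈ s)
    (hmax : ∀ k ∈ s, w k ≤ w i) (hwi : 0 < w i) (hgi : g i = 1) :
    s.sup' hs (fun k => w k * g k) / s.sup' hs w = 1 := by
  have hden : s.sup' hs w = w i := le_antisymm (sup'_le hs w hmax) (le_sup' w hi)
  have hnum : s.sup' hs (fun k => w k * g k) = w i := by
    refine le_antisymm (sup'_le hs _ fun k hk => ?_) (le_sup'_of_le _ hi (by simp [hgi]))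
    exact (mul_le_of_le_one_right (hw k hk) (hg k hk)).trans (hmax k hk)
  rw [hden, hnum, div_self hwi.ne']

theorem UMab_affine_eq_one {a b : ℝ} (hab : a ≠ b) {n j : ℕ} (hjn : j ≤ n) {f : ℝ → ℝ}
    (hf : ∀ x, f x ≤ 1) (hfj : f (a + (b - a) * j / n) = 1) {t : ℝ} (ht : 0 < t)
    (htj : ((n : ℝ) - 1) * t = j) : UMab a b n f (a + (b - a) * t) = 1 := by
  have hn : n ≠ 0 := by
    rintro rfl
    norm_num at htj
    linarith [j.cast_nonneg (α := ℝ)]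
  simp only [UMab, bkab_affine hab]
  exact Finset.sup'_mul_div_sup'_eq_one _ (fun k _ => bk_nonneg n k ht.le) (fun k _ => hf _)
    (mem_range.mpr (Nat.lt_succ_of_le hjn)) (fun k _ => bk_le_bk_of_sub_one_mul_eq ht.le htj k)
    (bk_pos hn j ht) hfj

theorem exists_node_mem_Ioo {a b c d : ℝ} (hac : a ≤ c) (hcd : c < d) (hdb : d ≤ b) {n : ℕ}
    (hn : n ≠ 0) (hmesh : (b - a) / n < d - c) :
    ∃ j : ℕ, 0 < j ∧ j < n ∧ a + (b - a) * j / n ∈ Ioo c d := by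
  set δ := (b - a) / n
  have hn' : (0 : ℝ) < n := by positivity
  have hδ : 0 < δ := div_pos (by linarith) hn'
  have hba : b - a = n * δ := by simp only [δ]; field_simp
  set j := ⌊(c - a) / δ⌋₊ + 1
  have hj_gt : c - a < j * δ := by
    rw [← div_lt_iff₀ hδ]; push_cast [j]; exact Nat.lt_floor_add_one _
  have hj_le : j * δ ≤ c - a + δ := by
    have := Nat.floor_le (div_nonneg (sub_nonneg.mpr hac) hδ.le)
    rw [le_div_iff₀ hδ] at this
    push_cast [j]; linarith
  have hnode : a + (b - a) * j / n = a + j * δ := by simp only [δ]; ring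
  have hjn : (j : ℝ) * δ < n * δ := by linarith
  exact ⟨j, Nat.succ_pos _, by exact_mod_cast lt_of_mul_lt_mul_right hjn hδ.le,
    by rw [hnode]; linarith, by rw [hnode]; linarith⟩

theorem fuzzy_UM_attains_one_general (u : ℝ → ℝ) (hu01 : ∀ x, u x ∈ Set.Icc (0 : ℝ) 1)
    (a b c d : ℝ) (hac : a ≤ c) (hcd : c < d) (hdb : d ≤ b)
    (hcore : {x : ℝ | u x = 1} = Set.Icc c d)
    (n : ℕ) (hn : 2 ≤ n) (hlarge : (b - a) / (n : ℝ) < d - c) :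
    ∃ α ∈ Set.Icc a b,
      (fun x => if x ∈ Set.Icc a b then UMab a b n u x else 0) α = 1 := by
  obtain ⟨j, hj0, hjn, hnode⟩ := exists_node_mem_Ioo hac hcd hdb (by omega) hlarge
  have hn1 : (0 : ℝ) < n - 1 := by
    have : (2 : ℝ) ≤ n := by exact_mod_cast hn
    linarith
  have hjn1 : (j : ℝ) ≤ n - 1 := by
    have : (j : ℝ) + 1 ≤ n := by exact_mod_cast hjn
    linarith
  set t : ℝ := j / (n - 1)
  have ht0 : 0 < t := div_pos (by exact_mod_cast hj0) hn1
  have hα : a + (b - a) * t ∈ Icc a b := by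
    have : t ≤ 1 := (div_le_one hn1).mpr hjn1
    constructor <;> nlinarith
  refine ⟨_, hα, ?_⟩
  simp only [if_pos hα]
  exact UMab_affine_eq_one (by linarith) hjn.le (fun x => (hu01 x).2)
    (hcore.ge (Ioo_subset_Icc_self hnode)) ht0 (mul_div_cancel₀ _ hn1.ne')

theorem fuzzy_UM_attains_one (u : ℝ → ℝ) (hu01 : ∀ x, u x ∈ Set.Icc (0 : ℝ) 1)
    (hcont : Continuous u)
    (hqc : QuasiconcaveOn ℝ Set.univ u)
    (a b c d : ℝ) (hac : a ≤ c) (hcd : c < d) (hdb : d ≤ b)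
    (hsupp : closure {x : ℝ | 0 < u x} = Set.Icc a b)
    (hcore : {x : ℝ | u x = 1} = Set.Icc c d)
    (n : ℕ) (hn : 2 ≤ n) (hlarge : (b - a) / (n : ℝ) < d - c) :
    ∃ α ∈ Set.Icc a b,
      (fun x => if x ∈ Set.Icc a b then UMab a b n u x else 0) α = 1 :=
  fuzzy_UM_attains_one_general u hu01 a b c d hac hcd hdb hcore n hn hlarge
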